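/- arXiv:1404.5365 — 2 statements merged into one kernel-verified Lean document; each statement's English description precedes it below -/
import Mathlib

section
/- Let F : ℝ³ → ℝ be any C¹ function with ∂F/∂u_i(u) = a_i(e^{u₁}, e^{u₂}, e^{u₃}) for i = 1, 2, 3, and let S = {u ∈ ℝ³ : u₁ + u₂ + u₃ = 0 and e^{u_i} + e^{u_j} > e^{u_k} for every permutation (i,j,k) of (1,2,3)}. Then F is strictly convex on S in the following sense: for any two distinct points u, v ∈ S such that the whole segment [u, v] lies in S, F((u+v)/2) < (F(u) + F(v))/2. -/
/-!
Along the line `s ↦ u + s • w`, `w = v - u`, the derivative of `F` is `∑ i, w i * aᵢ(x s)` with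
`x s = exp (u + s • w)`. Differentiating the angles once more (law of cosines, `xᵢ' = xᵢ wᵢ`)
gives `P(w) / √H`, where `H` is Heron's product `16 · area²` and `P` is a quadratic form in `w`
which is positive definite on the plane `∑ wᵢ = 0`, its discriminant there being a negative
multiple of `H`. So the restriction of `F` to the segment has positive second derivative.
-/

open Real

/-- The inner angle, opposite the edge of length `x i`, of the generalized Euclidean
triangle of edge lengths `x 0, x 1, x 2` (clamped arccos convention). -/
noncomputable def ang (i : Fin 3) (x : Fin 3 → ℝ) : ℝ :=
  Real.arccos (((x (i + 1)) ^ 2 + (x (i + 2)) ^ 2 - (x i) ^ 2) / (2 * x (i + 1) * x (i + 2)))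

def heron (a b c : ℝ) : ℝ := (a + b + c) * (-a + b + c) * (a - b + c) * (a + b - c)

lemma heron_pos {a b c : ℝ} (hbc : a < b + c) (hac : b < a + c) (hab : c < a + b) :
    0 < heron a b c := by
  have : 0 < a + b + c := by linarith
  unfold heron
  apply mul_pos (mul_pos (mul_pos _ _) _) _ <;> linarith

theorem HasDerivAt.arccos_lawOfCosines {a b c : ℝ → ℝ} {a' b' c' t : ℝ}
    (ha : HasDerivAt a (a t * a') t) (hb : HasDerivAt b (b t * b') t)
    (hc : HasDerivAt c (c t * c') t)
    (hbc : a t < b t + c t) (hac : b t < a t + c t) (hab : c t < a t + b t) :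
    HasDerivAt (fun s ↦ arccos ((b s ^ 2 + c s ^ 2 - a s ^ 2) / (2 * b s * c s)))
      (((c' - b') * (b t ^ 2 - c t ^ 2) + (2 * a' - b' - c') * a t ^ 2)
        / √(heron (a t) (b t) (c t))) t := by
  have hb0 : 0 < b t := by linarith
  have hc0 : 0 < c t := by linarith
  have hden : 2 * b t * c t ≠ 0 := by positivity
  have hr := (((hb.pow 2).add (hc.pow 2)).sub (ha.pow 2)).div ((hb.const_mul 2).mul hc) hden
  set r := (b t ^ 2 + c t ^ 2 - a t ^ 2) / (2 * b t * c t)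
  -- `1 - r ^ 2` is the squared sine of the angle, i.e. `heron / (2 b c) ^ 2`
  have hsin : 1 - r ^ 2 = heron (a t) (b t) (c t) / (2 * b t * c t) ^ 2 := by
    unfold r heron; field_simp; ring
  have hH := heron_pos hbc hac hab
  have hr1 : r ^ 2 < 1 := by
    have : 0 < 1 - r ^ 2 := by rw [hsin]; positivity
    linarith
  have hr1' : r ≠ 1 := by rintro h; simp [h] at hr1
  have hr2' : r ≠ -1 := by rintro h; simp [h] at hr1
  refine ((hasDerivAt_arccos hr2' hr1').comp t hr).congr_deriv ?_
  rw [hsin, Real.sqrt_div' _ (by positivity), Real.sqrt_sq (by positivity)]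
  have : 0 < √(heron (a t) (b t) (c t)) := Real.sqrt_pos.2 hH
  simp only [Pi.mul_apply, Pi.add_apply, Pi.sub_apply, Pi.pow_apply]
  field_simp
  ring

def IsStrictTriangle (x : Fin 3 → ℝ) : Prop :=
  ∀ i j k : Fin 3, i ≠ j → j ≠ k → i ≠ k → x k < x i + x j

lemma IsStrictTriangle.rotate {x : Fin 3 → ℝ} (hx : IsStrictTriangle x) (i : Fin 3) :
    x i < x (i + 1) + x (i + 2) ∧ x (i + 1) < x i + x (i + 2) ∧ x (i + 2) < x i + x (i + 1) := by
  fin_cases i <;> exact ⟨hx _ _ _ (by decide) (by decide) (by decide),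
    hx _ _ _ (by decide) (by decide) (by decide), hx _ _ _ (by decide) (by decide) (by decide)⟩

lemma heron_rotate (x : Fin 3 → ℝ) (i : Fin 3) :
    heron (x i) (x (i + 1)) (x (i + 2)) = heron (x 0) (x 1) (x 2) := by
  fin_cases i <;> simp [heron] <;> ring

/-- `√(heron …)` times the derivative of the angle `aᵢ` when `log x` moves with velocity `w`. -/
def angleRate (i : Fin 3) (w x : Fin 3 → ℝ) : ℝ :=
  (w (i + 2) - w (i + 1)) * (x (i + 1) ^ 2 - x (i + 2) ^ 2)
    + (2 * w i - w (i + 1) - w (i + 2)) * x i ^ 2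

lemma sum_mul_angleRate_pos {w x : Fin 3 → ℝ} (hx : IsStrictTriangle x)
    (hw : ∑ i, w i = 0) (hw0 : w ≠ 0) :
    0 < ∑ i, w i * angleRate i w x := by
  obtain ⟨h0, h1, h2⟩ := hx.rotate 0
  simp only [Fin.isValue, zero_add] at h0 h1 h2
  rw [Fin.sum_univ_three] at hw
  have hw2 : w 2 = -(w 0 + w 1) := by linarith
  set A := 2 * x 0 ^ 2 - x 1 ^ 2 + 2 * x 2 ^ 2
  set B := 5 * x 2 ^ 2 - x 0 ^ 2 - x 1 ^ 2
  have hx1 : 0 < x 1 := by linarith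
  have hA : 0 < A := by nlinarith [mul_self_lt_mul_self hx1.le h1, sq_nonneg (x 0 - x 2)]
  -- completing the square in `w 0`; the discriminant is `9 * heron`
  have key : 2 * A * ∑ i, w i * angleRate i w x
      = (2 * A * w 0 + B * w 1) ^ 2 + 9 * heron (x 0) (x 1) (x 2) * w 1 ^ 2 := by
    simp only [Fin.sum_univ_three, angleRate, Fin.isValue, Fin.reduceAdd, heron, A, B, hw2]
    ring
  have hH := heron_pos h0 h1 h2
  refine pos_of_mul_pos_right (a := 2 * A) ?_ (by positivity)
  rw [key]
  rcases eq_or_ne (w 1) 0 with h | h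
  · have : w 0 ≠ 0 := by
      rintro h'
      exact hw0 (funext fun i ↦ by fin_cases i <;> simp [h, h', hw2])
    have : 0 < (2 * A * w 0) ^ 2 := by positivity
    simpa [h] using this
  · positivity

lemma hasDerivAt_ang {x : ℝ → Fin 3 → ℝ} {w : Fin 3 → ℝ} {t : ℝ}
    (hx : ∀ m, HasDerivAt (fun s ↦ x s m) (x t m * w m) t) (htri : IsStrictTriangle (x t))
    (i : Fin 3) :
    HasDerivAt (fun s ↦ ang i (x s))
      (angleRate i w (x t) / √(heron (x t 0) (x t 1) (x t 2))) t := by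
  obtain ⟨h0, h1, h2⟩ := htri.rotate i
  rw [← heron_rotate (x t) i]
  exact HasDerivAt.arccos_lawOfCosines (hx i) (hx (i + 1)) (hx (i + 2)) h0 h1 h2

lemma deriv_sum_mul_ang_pos {x : ℝ → Fin 3 → ℝ} {w : Fin 3 → ℝ} {t : ℝ}
    (hx : ∀ m, HasDerivAt (fun s ↦ x s m) (x t m * w m) t) (htri : IsStrictTriangle (x t))
    (hw : ∑ i, w i = 0) (hw0 : w ≠ 0) :
    0 < deriv (fun s ↦ ∑ i, w i * ang i (x s)) t := by
  rw [(HasDerivAt.fun_sum fun i _ ↦ (hasDerivAt_ang hx htri i).const_mul (w i)).deriv]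
  simp only [← mul_div_assoc, ← Finset.sum_div]
  obtain ⟨h0, h1, h2⟩ := htri.rotate 0
  exact div_pos (sum_mul_angleRate_pos htri hw hw0) (Real.sqrt_pos.2 (heron_pos h0 h1 h2))

lemma ContinuousLinearMap.apply_eq_sum_mul_apply_single {ι : Type*} [Fintype ι] [DecidableEq ι]
    (f : (ι → ℝ) →L[ℝ] ℝ) (w : ι → ℝ) : f w = ∑ i, w i * f (Pi.single i 1) := by
  conv_lhs => rw [← Finset.univ_sum_single w]
  refine (map_sum f _ _).trans (Finset.sum_congr rfl fun i _ ↦ ?_)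
  rw [← smul_eq_mul, ← map_smul, ← Pi.single_smul', smul_eq_mul, mul_one]

theorem stmt2 (F : (Fin 3 → ℝ) → ℝ) (hF : ContDiff ℝ 1 F)
    (hgrad : ∀ u : Fin 3 → ℝ, ∀ i : Fin 3,
      fderiv ℝ F u (Pi.single i 1) = ang i (fun m => Real.exp (u m)))
    (S : Set (Fin 3 → ℝ))
    (hS : S = {u : Fin 3 → ℝ | u 0 + u 1 + u 2 = 0 ∧
      ∀ i j k : Fin 3, i ≠ j → j ≠ k → i ≠ k →
        Real.exp (u k) < Real.exp (u i) + Real.exp (u j)})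
    (u v : Fin 3 → ℝ) (hu : u ∈ S) (hv : v ∈ S) (huv : u ≠ v)
    (hseg : segment ℝ u v ⊆ S) :
    F (((1 : ℝ) / 2) • (u + v)) < (F u + F v) / 2 := by
  subst hS
  set w := v - u
  have hw : ∑ i, w i = 0 := by
    simp only [Fin.sum_univ_three, w, Pi.sub_apply]
    linarith [hu.1, hv.1]
  have hw0 : w ≠ 0 := sub_ne_zero.2 huv.symm
  set x : ℝ → Fin 3 → ℝ := fun s m ↦ exp (u m + s * w m)
  have hx : ∀ s m, HasDerivAt (fun s ↦ x s m) (x s m * w m) s := fun s m ↦ by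
    simpa using (((hasDerivAt_id s).mul_const (w m)).const_add (u m)).exp
  have hg : ∀ s, HasDerivAt (fun s : ℝ ↦ F (u + s • w)) (∑ i, w i * ang i (x s)) s := fun s ↦ by
    have hline : HasDerivAt (fun s : ℝ ↦ u + s • w) w s := by
      simpa using ((hasDerivAt_id s).smul_const w).const_add u
    refine ((hF.differentiable one_ne_zero _).hasFDerivAt.comp_hasDerivAt s hline).congr_deriv ?_
    simp [ContinuousLinearMap.apply_eq_sum_mul_apply_single _ w, hgrad, x]
  have hconv : StrictConvexOn ℝ (Set.Icc 0 1) (fun s : ℝ ↦ F (u + s • w)) := by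
    refine strictConvexOn_of_deriv2_pos (convex_Icc 0 1)
      (hF.continuous.comp (by fun_prop)).continuousOn fun s hs ↦ ?_
    have htri : IsStrictTriangle (x s) := by
      have := hseg (by rw [segment_eq_image']; exact ⟨s, interior_subset hs, rfl⟩)
      simpa [IsStrictTriangle, x, w] using this.2
    rw [Function.iterate_succ, Function.iterate_one, Function.comp_apply,
      funext fun s ↦ (hg s).deriv]
    exact deriv_sum_mul_ang_pos (hx s) htri hw hw0
  have := hconv.2 (Set.left_mem_Icc.2 zero_le_one) (Set.right_mem_Icc.2 zero_le_one) zero_ne_one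
    (by norm_num : (0 : ℝ) < 1 / 2) (by norm_num : (0 : ℝ) < 1 / 2) (by norm_num)
  have hmid : ((1 : ℝ) / 2) • (u + v) = u + (1 / 2 : ℝ) • w := by
    simp only [w]; module
  simp only [smul_eq_mul, mul_zero, mul_one, zero_add, zero_smul, add_zero, one_smul, w,
    add_sub_cancel] at this
  rw [hmid]
  linarith
end

section
/- Let l ∈ ℝ⁶ have all coordinates l_ij > 0 (indexed by two-element subsets {i,j} of {1,2,3,4}, with l_ji = l_ij). For distinct i, j, k set x^i_{jk} = arcosh((cosh l_ij · cosh l_ik + cosh l_jk)/(sinh l_ij · sinh l_ik)), and for {i,j,k,h} = {1,2,3,4} set φ^i_{kh} = (cosh x^i_{jk} · cosh x^i_{jh} − cosh x^i_{kh})/(sinh x^i_{jk} · sinh x^i_{jh}). Then φ^i_{kh} = φ^j_{kh} for every partition {i,j,k,h} = {1,2,3,4}. -/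
/-- The inverse hyperbolic cosine: `arcosh x = log (x + √(x² − 1))`,
satisfying `cosh (arcosh x) = x` for `x ≥ 1`. -/
noncomputable def arcosh (x : ℝ) : ℝ := Real.log (x + Real.sqrt (x ^ 2 - 1))

/-- `x^i_{jk} = arcosh((cosh l_ij cosh l_ik + cosh l_jk)/(sinh l_ij sinh l_ik))`,
the length of the vertex edge at vertex `i` in the face `{i,j,k}` of a generalized
hyper-ideal tetrahedron with edge lengths `l` (indexed by pairs of vertices). -/
noncomputable def xv (l : Fin 4 → Fin 4 → ℝ) (i j k : Fin 4) : ℝ :=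
  arcosh ((Real.cosh (l i j) * Real.cosh (l i k) + Real.cosh (l j k)) /
    (Real.sinh (l i j) * Real.sinh (l i k)))

/-- `φ^i_{kh} = (cosh x^i_{jk} cosh x^i_{jh} − cosh x^i_{kh})/(sinh x^i_{jk} sinh x^i_{jh})`,
where `j` is the remaining vertex. -/
noncomputable def Phi (l : Fin 4 → Fin 4 → ℝ) (i j k h : Fin 4) : ℝ :=
  (Real.cosh (xv l i j k) * Real.cosh (xv l i j h) - Real.cosh (xv l i k h)) /
    (Real.sinh (xv l i j k) * Real.sinh (xv l i j h))

namespace Aux10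

noncomputable def X (p q r : ℝ) : ℝ :=
  arcosh ((Real.cosh p * Real.cosh q + Real.cosh r) / (Real.sinh p * Real.sinh q))

lemma cosh_arcosh {x : ℝ} (hx : 1 ≤ x) : Real.cosh (arcosh x) = x := by
  have hs0 : 0 ≤ Real.sqrt (x ^ 2 - 1) := Real.sqrt_nonneg _
  have hs2 : Real.sqrt (x ^ 2 - 1) ^ 2 = x ^ 2 - 1 :=
    Real.sq_sqrt (by nlinarith)
  set s := Real.sqrt (x ^ 2 - 1)
  have hy : 0 < x + s := by nlinarith
  have h1 : (x + s) * (x - s) = 1 := by nlinarith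
  have hinv : (x + s)⁻¹ = x - s := inv_eq_of_mul_eq_one_right h1
  rw [arcosh, Real.cosh_eq, Real.exp_log hy, Real.exp_neg, Real.exp_log hy, hinv]
  ring

lemma sinh_arcosh {x : ℝ} (hx : 1 ≤ x) :
    Real.sinh (arcosh x) = Real.sqrt (x ^ 2 - 1) := by
  have hs0 : 0 ≤ Real.sqrt (x ^ 2 - 1) := Real.sqrt_nonneg _
  have hs2 : Real.sqrt (x ^ 2 - 1) ^ 2 = x ^ 2 - 1 :=
    Real.sq_sqrt (by nlinarith)
  set s := Real.sqrt (x ^ 2 - 1)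
  have hy : 0 < x + s := by nlinarith
  have h1 : (x + s) * (x - s) = 1 := by nlinarith
  have hinv : (x + s)⁻¹ = x - s := inv_eq_of_mul_eq_one_right h1
  rw [arcosh, Real.sinh_eq, Real.exp_log hy, Real.exp_neg, Real.exp_log hy, hinv]
  ring

lemma arg_gt_one {p q : ℝ} (hp : 0 < p) (hq : 0 < q) (r : ℝ) :
    1 < (Real.cosh p * Real.cosh q + Real.cosh r) / (Real.sinh p * Real.sinh q) := by
  have hsp : 0 < Real.sinh p := by positivity
  have hsq : 0 < Real.sinh q := by positivity
  rw [lt_div_iff₀ (by positivity)]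
  have h1 := Real.cosh_sub p q
  have h2 := Real.one_le_cosh (p - q)
  have h3 := Real.one_le_cosh r
  nlinarith

noncomputable def Q (p q r : ℝ) : ℝ :=
  Real.cosh p ^ 2 + Real.cosh q ^ 2 + Real.cosh r ^ 2 +
    2 * Real.cosh p * Real.cosh q * Real.cosh r - 1

lemma Q_pos (p q r : ℝ) : 0 < Q p q r := by
  have h1 := Real.one_le_cosh p
  have h2 := Real.one_le_cosh q
  have h3 := Real.one_le_cosh r
  have h12 : 1 ≤ Real.cosh p * Real.cosh q := by nlinarith
  have h123 : 1 ≤ Real.cosh p * Real.cosh q * Real.cosh r := by nlinarith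
  unfold Q
  nlinarith

lemma Q_symm (p q r : ℝ) : Q p q r = Q p r q := by unfold Q; ring

lemma cosh_X {p q : ℝ} (hp : 0 < p) (hq : 0 < q) (r : ℝ) :
    Real.cosh (X p q r) =
      (Real.cosh p * Real.cosh q + Real.cosh r) / (Real.sinh p * Real.sinh q) :=
  cosh_arcosh (le_of_lt (arg_gt_one hp hq r))

lemma sinh_X {p q : ℝ} (hp : 0 < p) (hq : 0 < q) (r : ℝ) :
    Real.sinh (X p q r) = Real.sqrt (Q p q r) / (Real.sinh p * Real.sinh q) := by
  have hsp : 0 < Real.sinh p := by positivity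
  have hsq : 0 < Real.sinh q := by positivity
  rw [X, sinh_arcosh (le_of_lt (arg_gt_one hp hq r))]
  have harg : ((Real.cosh p * Real.cosh q + Real.cosh r) /
      (Real.sinh p * Real.sinh q)) ^ 2 - 1 = Q p q r / (Real.sinh p * Real.sinh q) ^ 2 := by
    have hp2 := Real.sinh_sq p
    have hq2 := Real.sinh_sq q
    field_simp
    unfold Q
    linear_combination (-(Real.sinh q ^ 2)) * hp2 - (Real.cosh p ^ 2 - 1) * hq2
  rw [harg, Real.sqrt_div (Q_pos p q r).le, Real.sqrt_sq (by positivity)]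

lemma key (a b d e f g : ℝ) (ha : 0 < a) (hb : 0 < b) (hd : 0 < d)
    (he : 0 < e) (hf : 0 < f) (hg : 0 < g) :
    (Real.cosh (X a b e) * Real.cosh (X a d f) - Real.cosh (X b d g)) /
      (Real.sinh (X a b e) * Real.sinh (X a d f)) =
    (Real.cosh (X a e b) * Real.cosh (X a f d) - Real.cosh (X e f g)) /
      (Real.sinh (X a e b) * Real.sinh (X a f d)) := by
  have hsa : 0 < Real.sinh a := by positivity
  have hsb : 0 < Real.sinh b := by positivity
  have hsd : 0 < Real.sinh d := by positivity
  have hse : 0 < Real.sinh e := by positivity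
  have hsf : 0 < Real.sinh f := by positivity
  have hQ1 : 0 < Real.sqrt (Q a b e) := Real.sqrt_pos.2 (Q_pos a b e)
  have hQ2 : 0 < Real.sqrt (Q a d f) := Real.sqrt_pos.2 (Q_pos a d f)
  rw [cosh_X ha hb e, cosh_X ha hd f, cosh_X hb hd g, cosh_X ha he b, cosh_X ha hf d,
    cosh_X he hf g, sinh_X ha hb e, sinh_X ha hd f, sinh_X ha he b, sinh_X ha hf d,
    show Q a e b = Q a b e from Q_symm a e b, show Q a f d = Q a d f from Q_symm a f d]
  have hL : ((Real.cosh a * Real.cosh b + Real.cosh e) / (Real.sinh a * Real.sinh b) *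
      ((Real.cosh a * Real.cosh d + Real.cosh f) / (Real.sinh a * Real.sinh d)) -
      (Real.cosh b * Real.cosh d + Real.cosh g) / (Real.sinh b * Real.sinh d)) /
      (Real.sqrt (Q a b e) / (Real.sinh a * Real.sinh b) *
        (Real.sqrt (Q a d f) / (Real.sinh a * Real.sinh d))) =
      ((Real.cosh a * Real.cosh b + Real.cosh e) * (Real.cosh a * Real.cosh d + Real.cosh f) -
        Real.sinh a ^ 2 * (Real.cosh b * Real.cosh d + Real.cosh g)) /
      (Real.sqrt (Q a b e) * Real.sqrt (Q a d f)) := by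
    rw [div_eq_div_iff (by positivity) (by positivity)]
    field_simp
  have hR : ((Real.cosh a * Real.cosh e + Real.cosh b) / (Real.sinh a * Real.sinh e) *
      ((Real.cosh a * Real.cosh f + Real.cosh d) / (Real.sinh a * Real.sinh f)) -
      (Real.cosh e * Real.cosh f + Real.cosh g) / (Real.sinh e * Real.sinh f)) /
      (Real.sqrt (Q a b e) / (Real.sinh a * Real.sinh e) *
        (Real.sqrt (Q a d f) / (Real.sinh a * Real.sinh f))) =
      ((Real.cosh a * Real.cosh e + Real.cosh b) * (Real.cosh a * Real.cosh f + Real.cosh d) -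
        Real.sinh a ^ 2 * (Real.cosh e * Real.cosh f + Real.cosh g)) /
      (Real.sqrt (Q a b e) * Real.sqrt (Q a d f)) := by
    rw [div_eq_div_iff (by positivity) (by positivity)]
    field_simp
  rw [hL, hR]
  congr 1
  linear_combination (Real.cosh e * Real.cosh f - Real.cosh b * Real.cosh d) * Real.sinh_sq a

end Aux10

theorem stmt10 (l : Fin 4 → Fin 4 → ℝ) (hsym : ∀ r s, l r s = l s r)
    (hpos : ∀ r s, r ≠ s → 0 < l r s)
    (i j k h : Fin 4) (hij : i ≠ j) (hik : i ≠ k) (hih : i ≠ h)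
    (hjk : j ≠ k) (hjh : j ≠ h) (hkh : k ≠ h) :
    Phi l i j k h = Phi l j i k h := by
  have hkey := Aux10.key (l i j) (l i k) (l i h) (l j k) (l j h) (l k h)
    (hpos _ _ hij) (hpos _ _ hik) (hpos _ _ hih) (hpos _ _ hjk) (hpos _ _ hjh) (hpos _ _ hkh)
  simp only [Phi, xv, Aux10.X, hsym j i] at hkey ⊢
  exact hkey
end
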